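/- Fix r > 1 and α ∈ (1/2, 1]. For N ≥ 2 set c = ⌈N^{1−α}⌉, v = N, h_v = (v + c·r)/(v·r² + c·r) and h_c = (c + v·r)/(c·r² + v·r). Then h_v/(h_c^c − h_v) converges to 1/(r² − 1) as N → ∞; in particular, for every ε > 0 there is N₀ with h_v/(h_c^c − h_v) ≤ 1/(r²−1) + ε for all N ≥ N₀. -/

import Mathlib

open Filter Topology

/-- The size `c = ⌈N^{1−α}⌉` of the center of the α-Balanced bipartite graph. -/
noncomputable def centerSize (α : ℝ) (N : ℕ) : ℕ := ⌈(N : ℝ) ^ (1 - α)⌉₊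

/-- The martingale constant `h_v = (v + c·r)/(v·r² + c·r)` of the outside part of
the α-Balanced bipartite graph with `v = N` and `c = ⌈N^{1−α}⌉`. -/
noncomputable def hV (r α : ℝ) (N : ℕ) : ℝ :=
  ((N : ℝ) + (centerSize α N : ℝ) * r) / ((N : ℝ) * r ^ 2 + (centerSize α N : ℝ) * r)

/-- The martingale constant `h_c = (c + v·r)/(c·r² + v·r)` of the center of
the α-Balanced bipartite graph with `v = N` and `c = ⌈N^{1−α}⌉`. -/
noncomputable def hC (r α : ℝ) (N : ℕ) : ℝ :=
  ((centerSize α N : ℝ) + (N : ℝ) * r) / ((centerSize α N : ℝ) * r ^ 2 + (N : ℝ) * r)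

/-!
Write `c = ⌈N^{1−α}⌉`. Since `α > 1/2`, `c²/N → 0`, hence also `c/N → 0`, so
`h_v = (1 + (c/N) r)/(r² + (c/N) r) → 1/r²`. Writing `h_c = 1 − c(r² − 1)/(c r² + N r)`,
Bernoulli's inequality gives `1 − (r² − 1)/r · c²/N ≤ h_c^c ≤ 1`, so `h_c^c → 1`, and the
quotient tends to `(1/r²)/(1 − 1/r²) = 1/(r² − 1)`.
-/

section Ratios

variable {ι : Type*} {l : Filter ι}

lemma tendsto_ratio_of_tendsto_div_zero {r : ℝ} (hr : r ≠ 0) {c v : ι → ℝ}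
    (hv : ∀ᶠ i in l, v i ≠ 0) (hcv : Tendsto (fun i => c i / v i) l (𝓝 0)) :
    Tendsto (fun i => (v i + c i * r) / (v i * r ^ 2 + c i * r)) l (𝓝 (1 / r ^ 2)) := by
  have hlim : Tendsto (fun i => (1 + c i / v i * r) / (r ^ 2 + c i / v i * r)) l
      (𝓝 ((1 + 0 * r) / (r ^ 2 + 0 * r))) :=
    (tendsto_const_nhds.add (hcv.mul_const r)).div
      (tendsto_const_nhds.add (hcv.mul_const r)) (by simpa using pow_ne_zero 2 hr)
  simp only [zero_mul, add_zero] at hlim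
  refine hlim.congr' ?_
  filter_upwards [hv] with i hvi
  field_simp

lemma ratio_pow_le_one {r : ℝ} (hr : 1 ≤ r) (c : ℕ) {v : ℝ} (hv : 0 < v) :
    (((c : ℝ) + v * r) / (c * r ^ 2 + v * r)) ^ c ≤ 1 := by
  have hden : 0 < (c : ℝ) * r ^ 2 + v * r := by positivity
  refine pow_le_one₀ (by positivity) ((div_le_one hden).mpr ?_)
  nlinarith [mul_nonneg (Nat.cast_nonneg (α := ℝ) c) (sub_nonneg.2 (one_le_pow₀ hr (n := 2)))]

lemma one_sub_le_ratio_pow {r : ℝ} (hr : 1 ≤ r) (c : ℕ) {v : ℝ} (hv : 0 < v) :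
    1 - (r ^ 2 - 1) / r * ((c : ℝ) ^ 2 / v) ≤ (((c : ℝ) + v * r) / (c * r ^ 2 + v * r)) ^ c := by
  have hc : (0 : ℝ) ≤ c := Nat.cast_nonneg c
  have hr0 : 0 < r := by linarith
  have hden : 0 < (c : ℝ) * r ^ 2 + v * r := by positivity
  have hr2 : 0 ≤ r ^ 2 - 1 := sub_nonneg.2 (one_le_pow₀ hr)
  have hratio : ((c : ℝ) + v * r) / (c * r ^ 2 + v * r)
      = 1 + (c : ℝ) * (1 - r ^ 2) / (c * r ^ 2 + v * r) := by
    field_simp; ring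
  set a := (c : ℝ) * (1 - r ^ 2) / (c * r ^ 2 + v * r)
  have ha : -2 ≤ a := by
    rw [le_div_iff₀ hden]
    nlinarith
  have hca : (r ^ 2 - 1) / r * ((c : ℝ) ^ 2 / v) ≥ -(c * a) := by
    have hnum : 0 ≤ (c : ℝ) ^ 2 * (r ^ 2 - 1) := mul_nonneg (sq_nonneg _) hr2
    calc (r ^ 2 - 1) / r * ((c : ℝ) ^ 2 / v) = c ^ 2 * (r ^ 2 - 1) / (v * r) := by
          field_simp
      _ ≥ c ^ 2 * (r ^ 2 - 1) / (c * r ^ 2 + v * r) :=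
          div_le_div_of_nonneg_left hnum (by positivity) (by nlinarith)
      _ = -(c * a) := by simp only [a]; field_simp; ring
  rw [hratio]
  linarith [one_add_mul_le_pow ha c]

lemma tendsto_ratio_pow_of_tendsto_sq_div_zero {r : ℝ} (hr : 1 ≤ r) {c : ι → ℕ} {v : ι → ℝ}
    (hv : ∀ᶠ i in l, 0 < v i) (hcv : Tendsto (fun i => (c i : ℝ) ^ 2 / v i) l (𝓝 0)) :
    Tendsto (fun i => (((c i : ℝ) + v i * r) / (c i * r ^ 2 + v i * r)) ^ c i) l (𝓝 1) := by
  have hlow : Tendsto (fun i => 1 - (r ^ 2 - 1) / r * ((c i : ℝ) ^ 2 / v i)) l (𝓝 1) := by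
    simpa using (hcv.const_mul ((r ^ 2 - 1) / r)).const_sub 1
  refine tendsto_of_tendsto_of_tendsto_of_le_of_le' hlow tendsto_const_nhds ?_ ?_
  · filter_upwards [hv] with i hvi using one_sub_le_ratio_pow hr (c i) hvi
  · filter_upwards [hv] with i hvi using ratio_pow_le_one hr (c i) hvi

lemma tendsto_div_zero_of_tendsto_sq_div_zero {c : ι → ℕ} {v : ι → ℝ}
    (hv : ∀ᶠ i in l, 0 < v i) (hcv : Tendsto (fun i => (c i : ℝ) ^ 2 / v i) l (𝓝 0)) :
    Tendsto (fun i => (c i : ℝ) / v i) l (𝓝 0) := by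
  refine squeeze_zero' ?_ ?_ hcv
  · filter_upwards [hv] with i hvi using by positivity
  · filter_upwards [hv] with i hvi
    gcongr
    exact_mod_cast Nat.le_self_pow two_ne_zero (c i)

end Ratios

lemma centerSize_le_two_mul_rpow {α : ℝ} (hα : α ≤ 1) {N : ℕ} (hN : 1 ≤ N) :
    (centerSize α N : ℝ) ≤ 2 * (N : ℝ) ^ (1 - α) := by
  have h1 : (1 : ℝ) ≤ (N : ℝ) ^ (1 - α) :=
    Real.one_le_rpow (by exact_mod_cast hN) (by linarith)
  have := Nat.ceil_lt_add_one (a := (N : ℝ) ^ (1 - α)) (by positivity)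
  rw [centerSize]
  linarith

lemma tendsto_centerSize_sq_div_zero {α : ℝ} (hα0 : 1 / 2 < α) (hα1 : α ≤ 1) :
    Tendsto (fun N : ℕ => (centerSize α N : ℝ) ^ 2 / N) atTop (𝓝 0) := by
  have hlim : Tendsto (fun N : ℕ => 4 * (N : ℝ) ^ (1 - 2 * α)) atTop (𝓝 0) := by
    have h := ((tendsto_rpow_neg_atTop (y := 2 * α - 1) (by linarith)).comp
      tendsto_natCast_atTop_atTop).const_mul 4
    rw [mul_zero] at h
    convert h using 3
    simp
  refine squeeze_zero' (Eventually.of_forall fun N => by positivity) ?_ hlim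
  filter_upwards [eventually_ge_atTop 1] with N hN
  have hN0 : (0 : ℝ) < N := by exact_mod_cast hN
  have hsq : ((N : ℝ) ^ (1 - α)) ^ 2 = (N : ℝ) ^ (1 - 2 * α) * N := by
    rw [← Real.rpow_natCast, ← Real.rpow_mul hN0.le, ← Real.rpow_add_one hN0.ne']
    norm_num
    ring_nf
  rw [div_le_iff₀ hN0, mul_assoc, ← hsq]
  have hc := centerSize_le_two_mul_rpow hα1 hN
  nlinarith [Nat.cast_nonneg (α := ℝ) (centerSize α N)]

/-- In the 'small center' regime `α ∈ (1/2, 1]`, the backward-transition bound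
`h_v/(h_c^c − h_v)` converges to `1/(r² − 1)`; in particular, for every `ε > 0` it is
at most `1/(r²−1) + ε` for all sufficiently large `N`. -/
theorem small_center_backward_transition_bound
    (r α : ℝ) (hr : 1 < r) (hα0 : 1 / 2 < α) (hα1 : α ≤ 1) :
    Tendsto (fun N : ℕ => hV r α N / (hC r α N ^ centerSize α N - hV r α N))
      atTop (𝓝 (1 / (r ^ 2 - 1))) ∧
    ∀ ε > (0 : ℝ), ∃ N₀ : ℕ, ∀ N : ℕ, N₀ ≤ N →
      hV r α N / (hC r α N ^ centerSize α N - hV r α N) ≤ 1 / (r ^ 2 - 1) + ε := by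
  have hr2 : 1 < r ^ 2 := one_lt_pow₀ hr two_ne_zero
  have hNpos : ∀ᶠ N : ℕ in atTop, (0 : ℝ) < N :=
    (eventually_gt_atTop 0).mono fun N hN => Nat.cast_pos.mpr hN
  have hsq := tendsto_centerSize_sq_div_zero hα0 hα1
  have hVlim : Tendsto (hV r α) atTop (𝓝 (1 / r ^ 2)) :=
    tendsto_ratio_of_tendsto_div_zero (by positivity) (hNpos.mono fun _ h => h.ne')
      (tendsto_div_zero_of_tendsto_sq_div_zero hNpos hsq)
  have hClim : Tendsto (fun N => hC r α N ^ centerSize α N) atTop (𝓝 1) :=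
    tendsto_ratio_pow_of_tendsto_sq_div_zero hr.le hNpos hsq
  have hlimit : (1 : ℝ) / r ^ 2 / (1 - 1 / r ^ 2) = 1 / (r ^ 2 - 1) := by
    field_simp
  have hinv_lt_one : 1 / r ^ 2 < 1 := (div_lt_one (by positivity)).2 hr2
  have hmain := hVlim.div (hClim.sub hVlim) (sub_pos.2 hinv_lt_one).ne'
  rw [hlimit] at hmain
  refine ⟨hmain, fun ε hε => eventually_atTop.mp ?_⟩
  exact hmain.eventually (eventually_le_nhds (by linarith))
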